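/- arXiv:1307.1031 — 4 statements merged into one kernel-verified Lean document; each statement's English description precedes it below -/
import Mathlib

section
/- The real number Y = (1/4)·√(8 − √((3/2)·(27 − 7√5))) satisfies √2·(−265+153√3) + (500−288√3)·Y − 32√2·(−17+9√3)·Y² + 64·(−16+9√3)·Y³ − 512√2·Y⁴ + 1024·Y⁵ = 0. -/
set_option maxHeartbeats 1000000

theorem quintic_example_two :
    let Y : ℝ := (1 / 4) * Real.sqrt (8 - Real.sqrt ((3 / 2) * (27 - 7 * Real.sqrt 5)))
    Real.sqrt 2 * (-265 + 153 * Real.sqrt 3) + (500 - 288 * Real.sqrt 3) * Y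
      - 32 * Real.sqrt 2 * (-17 + 9 * Real.sqrt 3) * Y ^ 2
      + 64 * (-16 + 9 * Real.sqrt 3) * Y ^ 3
      - 512 * Real.sqrt 2 * Y ^ 4 + 1024 * Y ^ 5 = 0 := by
  intro Y
  set a : ℝ := Real.sqrt 2 with ha_def
  set b : ℝ := Real.sqrt 3 with hb_def
  set c : ℝ := Real.sqrt 5 with hc_def
  set s : ℝ := Real.sqrt ((3 / 2) * (27 - 7 * c)) with hs_def
  have ha0 : (0:ℝ) ≤ a := Real.sqrt_nonneg 2
  have hb0 : (0:ℝ) ≤ b := Real.sqrt_nonneg 3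
  have hc0 : (0:ℝ) ≤ c := Real.sqrt_nonneg 5
  have hs0 : (0:ℝ) ≤ s := Real.sqrt_nonneg _
  have ha : a ^ 2 = 2 := Real.sq_sqrt (by norm_num)
  have hb : b ^ 2 = 3 := Real.sq_sqrt (by norm_num)
  have hc : c ^ 2 = 5 := Real.sq_sqrt (by norm_num)
  have hc_ub : c ≤ 2.2361 := by nlinarith
  have hc_lb : 2.236 ≤ c := by nlinarith
  have hb_ub : b ≤ 1.7321 := by nlinarith
  have hs2 : s ^ 2 = (3 / 2) * (27 - 7 * c) := by
    rw [hs_def]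
    exact Real.sq_sqrt (by nlinarith)
  have hs_ub : s ≤ 4.127 := by nlinarith
  have hY0 : (0:ℝ) ≤ Y := by
    have := Real.sqrt_nonneg (8 - s)
    simp only [Y]
    positivity
  have hY2 : Y ^ 2 = (8 - s) / 16 := by
    show ((1 / 4) * Real.sqrt (8 - s)) ^ 2 = (8 - s) / 16
    have h8 : (0:ℝ) ≤ 8 - s := by nlinarith
    rw [mul_pow, Real.sq_sqrt h8]; ring
  -- hidden denesting relation : s*(5-c) = 2*b*(10-3*c)
  have hrel : s * (5 - c) = 2 * b * (10 - 3 * c) := by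
    have hsq : (s * (5 - c)) ^ 2 = (2 * b * (10 - 3 * c)) ^ 2 := by
      linear_combination (-400 + 240 * c - 36 * c ^ 2) * hb + (-3 + s ^ 2) * hc
        + (30 - 10 * c) * hs2
    have hz : (s * (5 - c) - 2 * b * (10 - 3 * c)) *
        (s * (5 - c) + 2 * b * (10 - 3 * c)) = 0 := by linear_combination hsq
    have hbpos : (0:ℝ) < b := Real.sqrt_pos.mpr (by norm_num)
    rcases mul_eq_zero.mp hz with h | h
    · linarith
    · nlinarith
  have hbs : b * s ≤ 7.1484 := by
    nlinarith [mul_nonneg (sub_nonneg.mpr hb_ub) hs0]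
  have hApos : (0:ℝ) ≤ 406 - 42 * c - 36 * (b * s) := by nlinarith
  have hCpos : (0:ℝ) < 202 * a - 9 * (a * b) - 21 * (a * c) + (2 * a - 18 * (a * b)) * s := by
    have hapos : (0:ℝ) < a := Real.sqrt_pos.mpr (by norm_num)
    have key : (0:ℝ) < 202 - 9 * b - 21 * c + (2 - 18 * b) * s := by nlinarith
    have hfac : 202 * a - 9 * (a * b) - 21 * (a * c) + (2 * a - 18 * (a * b)) * s
        = a * (202 - 9 * b - 21 * c + (2 - 18 * b) * s) := by ring
    rw [hfac]
    exact mul_pos hapos key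
  -- key equality : Y * A = C
  have hkey : Y * (406 - 42 * c - 36 * (b * s))
      = 202 * a - 9 * (a * b) - 21 * (a * c) + (2 * a - 18 * (a * b)) * s := by
    have hsq : (Y * (406 - 42 * c - 36 * (b * s))) ^ 2
        = (202 * a - 9 * (a * b) - 21 * (a * c) + (2 * a - 18 * (a * b)) * s) ^ 2 := by
      linear_combination
        (-40804 - 808 * s - 4 * s ^ 2 + 8484 * c + 84 * (c * s) - 441 * c ^ 2 + 3636 * b
          + 7308 * (b * s) + 72 * (b * s ^ 2) - 378 * (b * c) - 756 * (b * c * s)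
          - 81 * b ^ 2 - 324 * (b ^ 2 * s) - 324 * (b ^ 2 * s ^ 2)) * ha
        + (-162 - 648 * s - 648 * s ^ 2 + 1296 * (s ^ 2 * Y ^ 2)) * hb
        + (-882 + 1764 * Y ^ 2 + 3969 / 2 * b) * hc
        + (-1952 + 3888 * Y ^ 2 + 1971 * b - 189 * (b * c)) * hs2
        + (331120 - 74928 * c - 29232 * (b * s) + 3024 * (b * c * s)) * hY2
        + (-4851) * hrel
    have hz : (Y * (406 - 42 * c - 36 * (b * s))
          - (202 * a - 9 * (a * b) - 21 * (a * c) + (2 * a - 18 * (a * b)) * s)) *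
        (Y * (406 - 42 * c - 36 * (b * s))
          + (202 * a - 9 * (a * b) - 21 * (a * c) + (2 * a - 18 * (a * b)) * s)) = 0 := by
      linear_combination hsq
    rcases mul_eq_zero.mp hz with h | h
    · linarith
    · nlinarith [mul_nonneg hY0 hApos]
  linear_combination hkey + (4 * Y - 2 * a) * hs2
    + (-512 * Y + 1024 * Y ^ 3 - 64 * (s * Y) + 576 * (b * Y) + 288 * a
        - 512 * (a * Y ^ 2) + 32 * (a * s) - 288 * (a * b)) * hY2
end

section
/- Set h = sn(3u,k), x = dn(u,k) for k ∈ (0,1), u ∈ ℝ with sn(u,k) ≥ 0, cn(u,k) ≥ 0 and appropriate nonvanishing denominators. Then Y = k is a root of e + h·d·Y + c·Y² + h·b·Y³ + a·Y⁴ + h·Y⁵ = 0, where e = √(1−x²)(1−4x²+6x⁴−4x⁶+x⁸), d = 1−6x⁴+8x⁶−3x⁸, c = √(1−x²)(−2+8x²−6x⁴), b = −2+6x⁴−4x⁶, a = (1−4x²)√(1−x²). -/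
/-!
Put `S = sn² u`. The addition formulas give the classical triplication formula
`sn 3u · D(S) = sn u · N(S)` with polynomials `N, D` in `S` and `k²`. Since
`√(1 - dn² u) = k sn u` and `1 - dn² u = k² S`, the quintic evaluated at `Y = k`
collapses to `k⁵ (sn 3u · D(S) - sn u · N(S))`, which vanishes.
-/

def snTriplicationNum {R : Type*} [CommRing R] (k s : R) : R :=
  s * (3 - 4 * (1 + k ^ 2) * s ^ 2 + 6 * k ^ 2 * s ^ 4 - k ^ 4 * s ^ 8)

def snTriplicationDen {R : Type*} [CommRing R] (k s : R) : R :=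
  1 - 6 * k ^ 2 * s ^ 4 + 4 * k ^ 2 * (1 + k ^ 2) * s ^ 6 - 3 * k ^ 4 * s ^ 8

theorem sn_three_mul {K : Type*} [Field K] {k s c x s2 c2 d2 h : K}
    (h1 : s ^ 2 + c ^ 2 = 1) (h2 : k ^ 2 * s ^ 2 + x ^ 2 = 1)
    (hD2 : 1 - k ^ 2 * s ^ 4 ≠ 0)
    (hs2 : s2 = 2 * s * c * x / (1 - k ^ 2 * s ^ 4))
    (hc2 : c2 = (c ^ 2 - s ^ 2 * x ^ 2) / (1 - k ^ 2 * s ^ 4))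
    (hd2 : d2 = (x ^ 2 - k ^ 2 * s ^ 2 * c ^ 2) / (1 - k ^ 2 * s ^ 4))
    (hD3 : 1 - k ^ 2 * s ^ 2 * s2 ^ 2 ≠ 0)
    (hh : h = (s * c2 * d2 + s2 * c * x) / (1 - k ^ 2 * s ^ 2 * s2 ^ 2)) :
    h * snTriplicationDen k s = snTriplicationNum k s := by
  set E := 1 - k ^ 2 * s ^ 4
  have hc : c ^ 2 = 1 - s ^ 2 := by linear_combination h1
  have hx : x ^ 2 = 1 - k ^ 2 * s ^ 2 := by linear_combination h2
  have hcx : c ^ 2 * x ^ 2 = (1 - s ^ 2) * (1 - k ^ 2 * s ^ 2) := by rw [hc, hx]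
  have hs2E : s2 * E = 2 * s * c * x := by rw [hs2]; exact div_mul_cancel₀ _ hD2
  have hc2E : c2 * E = 1 - 2 * s ^ 2 + k ^ 2 * s ^ 4 := by
    rw [hc2, div_mul_cancel₀ _ hD2, hc, hx]; ring
  have hd2E : d2 * E = 1 - 2 * k ^ 2 * s ^ 2 + k ^ 2 * s ^ 4 := by
    rw [hd2, div_mul_cancel₀ _ hD2, hc, hx]; ring
  have hden : (1 - k ^ 2 * s ^ 2 * s2 ^ 2) * E ^ 2 = snTriplicationDen k s := by
    unfold snTriplicationDen
    linear_combination -k ^ 2 * s ^ 2 * (s2 * E + 2 * s * c * x) * hs2E - 4 * k ^ 2 * s ^ 4 * hcx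
  have hnum : (s * c2 * d2 + s2 * c * x) * E ^ 2 = snTriplicationNum k s := by
    unfold snTriplicationNum
    linear_combination s * d2 * E * hc2E + s * (1 - 2 * s ^ 2 + k ^ 2 * s ^ 4) * hd2E
      + c * x * E * hs2E + 2 * s * E * hcx
  calc h * snTriplicationDen k s = h * (1 - k ^ 2 * s ^ 2 * s2 ^ 2) * E ^ 2 := by
        rw [← hden]; ring
    _ = snTriplicationNum k s := by rw [hh, div_mul_cancel₀ _ hD3, hnum]

theorem quintic_eval_modulus {R : Type*} [CommRing R] {k s x : R} (h : R)
    (h2 : k ^ 2 * s ^ 2 + x ^ 2 = 1) :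
    k * s * (1 - 4 * x ^ 2 + 6 * x ^ 4 - 4 * x ^ 6 + x ^ 8)
      + h * (1 - 6 * x ^ 4 + 8 * x ^ 6 - 3 * x ^ 8) * k
      + k * s * (-2 + 8 * x ^ 2 - 6 * x ^ 4) * k ^ 2
      + h * (-2 + 6 * x ^ 4 - 4 * x ^ 6) * k ^ 3
      + (1 - 4 * x ^ 2) * (k * s) * k ^ 4
      + h * k ^ 5 = k ^ 5 * (h * snTriplicationDen k s - snTriplicationNum k s) := by
  have hx : x ^ 2 = 1 - k ^ 2 * s ^ 2 := by linear_combination h2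
  rw [show x ^ 4 = (x ^ 2) ^ 2 by ring, show x ^ 6 = (x ^ 2) ^ 3 by ring,
    show x ^ 8 = (x ^ 2) ^ 4 by ring, hx]
  unfold snTriplicationDen snTriplicationNum
  ring

theorem main_theorem_general (k s c x s2 c2 d2 h : ℝ) (hk0 : 0 < k)
    (h1 : s ^ 2 + c ^ 2 = 1) (h2 : k ^ 2 * s ^ 2 + x ^ 2 = 1)
    (hs : 0 ≤ s)
    (hD2 : 1 - k ^ 2 * s ^ 4 ≠ 0)
    (hs2 : s2 = 2 * s * c * x / (1 - k ^ 2 * s ^ 4))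
    (hc2 : c2 = (c ^ 2 - s ^ 2 * x ^ 2) / (1 - k ^ 2 * s ^ 4))
    (hd2 : d2 = (x ^ 2 - k ^ 2 * s ^ 2 * c ^ 2) / (1 - k ^ 2 * s ^ 4))
    (hD3 : 1 - k ^ 2 * s ^ 2 * s2 ^ 2 ≠ 0)
    (hh : h = (s * c2 * d2 + s2 * c * x) / (1 - k ^ 2 * s ^ 2 * s2 ^ 2)) :
    Real.sqrt (1 - x ^ 2) * (1 - 4 * x ^ 2 + 6 * x ^ 4 - 4 * x ^ 6 + x ^ 8)
      + h * (1 - 6 * x ^ 4 + 8 * x ^ 6 - 3 * x ^ 8) * k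
      + Real.sqrt (1 - x ^ 2) * (-2 + 8 * x ^ 2 - 6 * x ^ 4) * k ^ 2
      + h * (-2 + 6 * x ^ 4 - 4 * x ^ 6) * k ^ 3
      + (1 - 4 * x ^ 2) * Real.sqrt (1 - x ^ 2) * k ^ 4
      + h * k ^ 5 = 0 := by
  have hsqrt : Real.sqrt (1 - x ^ 2) = k * s := by
    rw [show 1 - x ^ 2 = (k * s) ^ 2 by linear_combination -h2]
    exact Real.sqrt_sq (mul_nonneg hk0.le hs)
  rw [hsqrt, quintic_eval_modulus h h2, sn_three_mul h1 h2 hD2 hs2 hc2 hd2 hD3 hh, sub_self,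
    mul_zero]

/-- Main Theorem: with `x = dn(u,k)` and `h = sn(3u,k)` (given via the Jacobi
addition formulas), `Y = k` is a root of the two–parameter quintic. -/
theorem main_theorem (k u s c x s2 c2 d2 h : ℝ) (hk0 : 0 < k) (hk1 : k < 1)
    (h1 : s ^ 2 + c ^ 2 = 1) (h2 : k ^ 2 * s ^ 2 + x ^ 2 = 1)
    (hs : 0 ≤ s) (hc : 0 ≤ c)
    (hD2 : 1 - k ^ 2 * s ^ 4 ≠ 0)
    (hs2 : s2 = 2 * s * c * x / (1 - k ^ 2 * s ^ 4))
    (hc2 : c2 = (c ^ 2 - s ^ 2 * x ^ 2) / (1 - k ^ 2 * s ^ 4))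
    (hd2 : d2 = (x ^ 2 - k ^ 2 * s ^ 2 * c ^ 2) / (1 - k ^ 2 * s ^ 4))
    (hD3 : 1 - k ^ 2 * s ^ 2 * s2 ^ 2 ≠ 0)
    (hh : h = (s * c2 * d2 + s2 * c * x) / (1 - k ^ 2 * s ^ 2 * s2 ^ 2)) :
    Real.sqrt (1 - x ^ 2) * (1 - 4 * x ^ 2 + 6 * x ^ 4 - 4 * x ^ 6 + x ^ 8)
      + h * (1 - 6 * x ^ 4 + 8 * x ^ 6 - 3 * x ^ 8) * k
      + Real.sqrt (1 - x ^ 2) * (-2 + 8 * x ^ 2 - 6 * x ^ 4) * k ^ 2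
      + h * (-2 + 6 * x ^ 4 - 4 * x ^ 6) * k ^ 3
      + (1 - 4 * x ^ 2) * Real.sqrt (1 - x ^ 2) * k ^ 4
      + h * k ^ 5 = 0 :=
  main_theorem_general k s c x s2 c2 d2 h hk0 h1 h2 hs hD2 hs2 hc2 hd2 hD3 hh
end

section
/- Suppose h, k, X are real with k ∈ (0,1), 0 ≤ X ≤ 1, and X = dn²(v,k) where h = sn(3v,k), sn(v,k) ≥ 0, cn(v,k) ≥ 0 (with nonvanishing denominators in the triplication formulas). Then h·k·(k⁴ + k²(−4X³+6X²−2) + (1−X)³(3X+1)) + (k⁴(1−4X) + k²(−6X²+8X−2) + (1−X)⁴)·√(1−X) = 0. -/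
/-!
With `u = sn² v`, the Jacobi relations `cn² = 1 - u`, `dn² = 1 - k²u` turn the doubling formulas
into rational functions of `sn v`, and applying the addition formula once more gives the
triplication formula `sn 3v · snTripleDen k u = sn v · snTripleNum k u`. Since
`sn v, k ≥ 0`, we have `√(1 - X) = k sn v` and `X = 1 - k²u`; in these terms the left side of (29)
is exactly `k⁵ (sn 3v · snTripleDen k u - sn v · snTripleNum k u)`.
-/

section JacobiTriplication

variable {K : Type*} [Field K] {k s c d s2 c2 d2 h : K}

def snTripleNum (k u : K) : K := 3 - 4 * (1 + k ^ 2) * u + 6 * k ^ 2 * u ^ 2 - k ^ 4 * u ^ 4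

def snTripleDen (k u : K) : K :=
  1 - 6 * k ^ 2 * u ^ 2 + 4 * k ^ 2 * (1 + k ^ 2) * u ^ 3 - 3 * k ^ 4 * u ^ 4

variable (h1 : s ^ 2 + c ^ 2 = 1) (h2 : k ^ 2 * s ^ 2 + d ^ 2 = 1)
include h1 h2

lemma sn_double_sq_eq (hs2 : s2 = 2 * s * c * d / (1 - k ^ 2 * s ^ 4)) :
    s2 ^ 2 = 4 * s ^ 2 * (1 - s ^ 2) * (1 - k ^ 2 * s ^ 2) / (1 - k ^ 2 * s ^ 4) ^ 2 := by
  rw [hs2, div_pow]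
  congr 1
  linear_combination 4 * s ^ 2 * (c ^ 2 * h2 + (1 - k ^ 2 * s ^ 2) * h1)

lemma sn_double_mul_cn_mul_dn_eq (hs2 : s2 = 2 * s * c * d / (1 - k ^ 2 * s ^ 4)) :
    s2 * c * d = 2 * s * (1 - s ^ 2) * (1 - k ^ 2 * s ^ 2) / (1 - k ^ 2 * s ^ 4) := by
  rw [hs2, div_mul_eq_mul_div, div_mul_eq_mul_div]
  congr 1
  linear_combination 2 * s * (c ^ 2 * h2 + (1 - k ^ 2 * s ^ 2) * h1)

lemma cn_double_eq (hc2 : c2 = (c ^ 2 - s ^ 2 * d ^ 2) / (1 - k ^ 2 * s ^ 4)) :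
    c2 = (1 - 2 * s ^ 2 + k ^ 2 * s ^ 4) / (1 - k ^ 2 * s ^ 4) := by
  rw [hc2]
  congr 1
  linear_combination h1 - s ^ 2 * h2

lemma dn_double_eq (hd2 : d2 = (d ^ 2 - k ^ 2 * s ^ 2 * c ^ 2) / (1 - k ^ 2 * s ^ 4)) :
    d2 = (1 - 2 * k ^ 2 * s ^ 2 + k ^ 2 * s ^ 4) / (1 - k ^ 2 * s ^ 4) := by
  rw [hd2]
  congr 1
  linear_combination h2 - k ^ 2 * s ^ 2 * h1

lemma one_sub_mul_sn_double_sq_eq (hD2 : 1 - k ^ 2 * s ^ 4 ≠ 0)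
    (hs2 : s2 = 2 * s * c * d / (1 - k ^ 2 * s ^ 4)) :
    1 - k ^ 2 * s ^ 2 * s2 ^ 2 = snTripleDen k (s ^ 2) / (1 - k ^ 2 * s ^ 4) ^ 2 := by
  rw [sn_double_sq_eq h1 h2 hs2, eq_div_iff (pow_ne_zero 2 hD2)]
  field_simp
  unfold snTripleDen
  ring

lemma sn_add_sn_double_numerator_eq (hs2 : s2 = 2 * s * c * d / (1 - k ^ 2 * s ^ 4))
    (hc2 : c2 = (c ^ 2 - s ^ 2 * d ^ 2) / (1 - k ^ 2 * s ^ 4))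
    (hd2 : d2 = (d ^ 2 - k ^ 2 * s ^ 2 * c ^ 2) / (1 - k ^ 2 * s ^ 4)) :
    s * c2 * d2 + s2 * c * d = s * snTripleNum k (s ^ 2) / (1 - k ^ 2 * s ^ 4) ^ 2 := by
  rw [cn_double_eq h1 h2 hc2, dn_double_eq h1 h2 hd2, sn_double_mul_cn_mul_dn_eq h1 h2 hs2]
  field_simp
  unfold snTripleNum
  ring

lemma sn_triple_mul_snTripleDen (hD2 : 1 - k ^ 2 * s ^ 4 ≠ 0)
    (hs2 : s2 = 2 * s * c * d / (1 - k ^ 2 * s ^ 4))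
    (hc2 : c2 = (c ^ 2 - s ^ 2 * d ^ 2) / (1 - k ^ 2 * s ^ 4))
    (hd2 : d2 = (d ^ 2 - k ^ 2 * s ^ 2 * c ^ 2) / (1 - k ^ 2 * s ^ 4))
    (hD3 : 1 - k ^ 2 * s ^ 2 * s2 ^ 2 ≠ 0)
    (hh : h = (s * c2 * d2 + s2 * c * d) / (1 - k ^ 2 * s ^ 2 * s2 ^ 2)) :
    h * snTripleDen k (s ^ 2) = s * snTripleNum k (s ^ 2) := by
  rw [one_sub_mul_sn_double_sq_eq h1 h2 hD2 hs2] at hD3 hh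
  rw [sn_add_sn_double_numerator_eq h1 h2 hs2 hc2 hd2,
    div_div_div_cancel_right₀ (pow_ne_zero 2 hD2)] at hh
  rw [hh, div_mul_cancel₀ _ (div_ne_zero_iff.mp hD3).1]

end JacobiTriplication

lemma sqrt_one_sub_dn_sq {k s d : ℝ} (hk : 0 ≤ k) (hs : 0 ≤ s) (h2 : k ^ 2 * s ^ 2 + d ^ 2 = 1) :
    √(1 - d ^ 2) = k * s := by
  rw [← h2, add_sub_cancel_right, ← mul_pow, Real.sqrt_sq (mul_nonneg hk hs)]

theorem theorem_one_general (k s c d X s2 c2 d2 h : ℝ) (hk0 : 0 < k)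
    (hXd : X = d ^ 2)
    (h1 : s ^ 2 + c ^ 2 = 1) (h2 : k ^ 2 * s ^ 2 + d ^ 2 = 1)
    (hs : 0 ≤ s)
    (hD2 : 1 - k ^ 2 * s ^ 4 ≠ 0)
    (hs2 : s2 = 2 * s * c * d / (1 - k ^ 2 * s ^ 4))
    (hc2 : c2 = (c ^ 2 - s ^ 2 * d ^ 2) / (1 - k ^ 2 * s ^ 4))
    (hd2 : d2 = (d ^ 2 - k ^ 2 * s ^ 2 * c ^ 2) / (1 - k ^ 2 * s ^ 4))
    (hD3 : 1 - k ^ 2 * s ^ 2 * s2 ^ 2 ≠ 0)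
    (hh : h = (s * c2 * d2 + s2 * c * d) / (1 - k ^ 2 * s ^ 2 * s2 ^ 2)) :
    h * k * (k ^ 4 + k ^ 2 * (-4 * X ^ 3 + 6 * X ^ 2 - 2) + (1 - X) ^ 3 * (3 * X + 1))
      + (k ^ 4 * (1 - 4 * X) + k ^ 2 * (-6 * X ^ 2 + 8 * X - 2) + (1 - X) ^ 4)
        * Real.sqrt (1 - X) = 0 := by
  have htriple := sn_triple_mul_snTripleDen h1 h2 hD2 hs2 hc2 hd2 hD3 hh
  have hsqrt : √(1 - X) = k * s := hXd ▸ sqrt_one_sub_dn_sq hk0.le hs h2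
  have hX : X = 1 - k ^ 2 * s ^ 2 := by linear_combination hXd + h2
  rw [hsqrt, hX]
  unfold snTripleDen snTripleNum at htriple
  linear_combination k ^ 5 * htriple

/-- Theorem 1 of the paper: with `X = dn²(v,k)` and `h = sn(3v,k)` (given via the
Jacobi addition formulas), equation (29) holds. -/
theorem theorem_one (k v s c d X s2 c2 d2 h : ℝ) (hk0 : 0 < k) (hk1 : k < 1)
    (hX0 : 0 ≤ X) (hX1 : X ≤ 1) (hXd : X = d ^ 2)
    (h1 : s ^ 2 + c ^ 2 = 1) (h2 : k ^ 2 * s ^ 2 + d ^ 2 = 1)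
    (hs : 0 ≤ s) (hc : 0 ≤ c)
    (hD2 : 1 - k ^ 2 * s ^ 4 ≠ 0)
    (hs2 : s2 = 2 * s * c * d / (1 - k ^ 2 * s ^ 4))
    (hc2 : c2 = (c ^ 2 - s ^ 2 * d ^ 2) / (1 - k ^ 2 * s ^ 4))
    (hd2 : d2 = (d ^ 2 - k ^ 2 * s ^ 2 * c ^ 2) / (1 - k ^ 2 * s ^ 4))
    (hD3 : 1 - k ^ 2 * s ^ 2 * s2 ^ 2 ≠ 0)
    (hh : h = (s * c2 * d2 + s2 * c * d) / (1 - k ^ 2 * s ^ 2 * s2 ^ 2)) :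
    h * k * (k ^ 4 + k ^ 2 * (-4 * X ^ 3 + 6 * X ^ 2 - 2) + (1 - X) ^ 3 * (3 * X + 1))
      + (k ^ 4 * (1 - 4 * X) + k ^ 2 * (-6 * X ^ 2 + 8 * X - 2) + (1 - X) ^ 4)
        * Real.sqrt (1 - X) = 0 :=
  theorem_one_general k s c d X s2 c2 d2 h hk0 hXd h1 h2 hs hD2 hs2 hc2 hd2 hD3 hh
end

section
/- Let k ∈ (0,1), u ∈ ℝ, x = dn(u,k), with sn u, cn u ≥ 0 and nonvanishing denominators. Then cn(3u,k)·k·((k²−1)² + 6(k²−1)x⁴ − 4(k²−2)x⁶ − 3x⁸) = √(k²+x²−1)·(k⁴ + (x²−1)⁴ + k²(−2+4x²−6x⁴+4x⁶)), assuming k²+x²−1 ≥ 0. -/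
/-!
With `σ = sn² u`, the addition formulas give `cn 3u = cn u · P(σ) / Q(σ)` for two quartics `P`, `Q`,
after clearing the common factor `(1 - k² sn⁴ u)²`. Substituting `σ = (1 - dn² u) / k²` turns
`k⁴ P` and `k⁴ Q` into the two polynomials in `x = dn u` of the statement, and
`k² + dn² u - 1 = k² cn² u` identifies the square root with `k cn u`.
-/

def cnTripleNum {K : Type*} [Field K] (k x : K) : K :=
  k ^ 4 + (x ^ 2 - 1) ^ 4 + k ^ 2 * (-2 + 4 * x ^ 2 - 6 * x ^ 4 + 4 * x ^ 6)

def cnTripleDen {K : Type*} [Field K] (k x : K) : K :=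
  (k ^ 2 - 1) ^ 2 + 6 * (k ^ 2 - 1) * x ^ 4 - 4 * (k ^ 2 - 2) * x ^ 6 - 3 * x ^ 8

section Triplication

variable {K : Type*} [Field K] {k s c x s2 c2 d2 c3 : K}

theorem cn_mul_cn_two_sub_sn_mul_sn_two_mul_dn_mul_dn_two
    (hs2 : s2 = 2 * s * c * x / (1 - k ^ 2 * s ^ 4))
    (hc2 : c2 = (c ^ 2 - s ^ 2 * x ^ 2) / (1 - k ^ 2 * s ^ 4))
    (hd2 : d2 = (x ^ 2 - k ^ 2 * s ^ 2 * c ^ 2) / (1 - k ^ 2 * s ^ 4)) :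
    c * c2 - s * s2 * x * d2 = c * ((c ^ 2 - s ^ 2 * x ^ 2) * (1 - k ^ 2 * s ^ 4)
      - 2 * s ^ 2 * x ^ 2 * (x ^ 2 - k ^ 2 * s ^ 2 * c ^ 2)) / (1 - k ^ 2 * s ^ 4) ^ 2 := by
  subst hs2 hc2 hd2
  field_simp

theorem one_sub_sq_mul_sn_sq_mul_sn_two_sq (hD2 : 1 - k ^ 2 * s ^ 4 ≠ 0)
    (hs2 : s2 = 2 * s * c * x / (1 - k ^ 2 * s ^ 4)) :
    1 - k ^ 2 * s ^ 2 * s2 ^ 2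
      = ((1 - k ^ 2 * s ^ 4) ^ 2 - 4 * k ^ 2 * s ^ 4 * c ^ 2 * x ^ 2) / (1 - k ^ 2 * s ^ 4) ^ 2 := by
  subst hs2
  field_simp
  ring

theorem cn_three_eq_cn_mul_div (hD2 : 1 - k ^ 2 * s ^ 4 ≠ 0)
    (hs2 : s2 = 2 * s * c * x / (1 - k ^ 2 * s ^ 4))
    (hc2 : c2 = (c ^ 2 - s ^ 2 * x ^ 2) / (1 - k ^ 2 * s ^ 4))
    (hd2 : d2 = (x ^ 2 - k ^ 2 * s ^ 2 * c ^ 2) / (1 - k ^ 2 * s ^ 4))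
    (hc3 : c3 = (c * c2 - s * s2 * x * d2) / (1 - k ^ 2 * s ^ 2 * s2 ^ 2)) :
    c3 = c * ((c ^ 2 - s ^ 2 * x ^ 2) * (1 - k ^ 2 * s ^ 4)
      - 2 * s ^ 2 * x ^ 2 * (x ^ 2 - k ^ 2 * s ^ 2 * c ^ 2))
      / ((1 - k ^ 2 * s ^ 4) ^ 2 - 4 * k ^ 2 * s ^ 4 * c ^ 2 * x ^ 2) := by
  rw [hc3, cn_mul_cn_two_sub_sn_mul_sn_two_mul_dn_mul_dn_two hs2 hc2 hd2,
    one_sub_sq_mul_sn_sq_mul_sn_two_sq hD2 hs2, div_div_div_cancel_right₀ (pow_ne_zero 2 hD2)]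

theorem sn_sq_eq_of_dn (hk : k ≠ 0) (h2 : k ^ 2 * s ^ 2 + x ^ 2 = 1) :
    s ^ 2 = (1 - x ^ 2) / k ^ 2 := by
  field_simp
  linear_combination h2

theorem cn_sq_eq_of_dn (hk : k ≠ 0) (h1 : s ^ 2 + c ^ 2 = 1) (h2 : k ^ 2 * s ^ 2 + x ^ 2 = 1) :
    c ^ 2 = (k ^ 2 + x ^ 2 - 1) / k ^ 2 := by
  field_simp
  linear_combination k ^ 2 * h1 - h2

theorem pow_four_mul_cn_triple_num_eq (hk : k ≠ 0) (h1 : s ^ 2 + c ^ 2 = 1)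
    (h2 : k ^ 2 * s ^ 2 + x ^ 2 = 1) :
    k ^ 4 * ((c ^ 2 - s ^ 2 * x ^ 2) * (1 - k ^ 2 * s ^ 4)
      - 2 * s ^ 2 * x ^ 2 * (x ^ 2 - k ^ 2 * s ^ 2 * c ^ 2)) = cnTripleNum k x := by
  rw [show s ^ 4 = (s ^ 2) ^ 2 by ring, sn_sq_eq_of_dn hk h2, cn_sq_eq_of_dn hk h1 h2, cnTripleNum]
  field_simp
  ring

theorem pow_four_mul_cn_triple_den_eq (hk : k ≠ 0) (h1 : s ^ 2 + c ^ 2 = 1)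
    (h2 : k ^ 2 * s ^ 2 + x ^ 2 = 1) :
    k ^ 4 * ((1 - k ^ 2 * s ^ 4) ^ 2 - 4 * k ^ 2 * s ^ 4 * c ^ 2 * x ^ 2) = cnTripleDen k x := by
  rw [show s ^ 4 = (s ^ 2) ^ 2 by ring, sn_sq_eq_of_dn hk h2, cn_sq_eq_of_dn hk h1 h2, cnTripleDen]
  field_simp
  ring

end Triplication

theorem sqrt_sq_add_dn_sq_sub_one {k s c x : ℝ} (hk : 0 ≤ k) (hc : 0 ≤ c)
    (h1 : s ^ 2 + c ^ 2 = 1) (h2 : k ^ 2 * s ^ 2 + x ^ 2 = 1) :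
    √(k ^ 2 + x ^ 2 - 1) = k * c := by
  rw [show k ^ 2 + x ^ 2 - 1 = (k * c) ^ 2 by linear_combination h2 - k ^ 2 * h1]
  exact Real.sqrt_sq (mul_nonneg hk hc)

theorem cn_triple_general (k s c x s2 c2 d2 c3 : ℝ) (hk0 : 0 < k)
    (h1 : s ^ 2 + c ^ 2 = 1) (h2 : k ^ 2 * s ^ 2 + x ^ 2 = 1)
    (hc : 0 ≤ c)
    (hD2 : 1 - k ^ 2 * s ^ 4 ≠ 0)
    (hs2 : s2 = 2 * s * c * x / (1 - k ^ 2 * s ^ 4))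
    (hc2 : c2 = (c ^ 2 - s ^ 2 * x ^ 2) / (1 - k ^ 2 * s ^ 4))
    (hd2 : d2 = (x ^ 2 - k ^ 2 * s ^ 2 * c ^ 2) / (1 - k ^ 2 * s ^ 4))
    (hc3 : c3 = (c * c2 - s * s2 * x * d2) / (1 - k ^ 2 * s ^ 2 * s2 ^ 2))
    (hden : (k ^ 2 - 1) ^ 2 + 6 * (k ^ 2 - 1) * x ^ 4 - 4 * (k ^ 2 - 2) * x ^ 6
        - 3 * x ^ 8 ≠ 0) :
    c3 * k * ((k ^ 2 - 1) ^ 2 + 6 * (k ^ 2 - 1) * x ^ 4 - 4 * (k ^ 2 - 2) * x ^ 6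
        - 3 * x ^ 8)
      = Real.sqrt (k ^ 2 + x ^ 2 - 1) * (k ^ 4 + (x ^ 2 - 1) ^ 4
        + k ^ 2 * (-2 + 4 * x ^ 2 - 6 * x ^ 4 + 4 * x ^ 6)) := by
  have hk : k ≠ 0 := hk0.ne'
  have hc3' : c3 = c * cnTripleNum k x / cnTripleDen k x := by
    rw [cn_three_eq_cn_mul_div hD2 hs2 hc2 hd2 hc3, ← pow_four_mul_cn_triple_num_eq hk h1 h2,
      ← pow_four_mul_cn_triple_den_eq hk h1 h2, mul_left_comm, mul_div_mul_left _ _ (pow_ne_zero 4 hk)]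
  change cnTripleDen k x ≠ 0 at hden
  change c3 * k * cnTripleDen k x = _ * cnTripleNum k x
  rw [sqrt_sq_add_dn_sq_sub_one hk0.le hc h1 h2, hc3']
  field_simp

/-- `s, c, x` are `sn(u,k), cn(u,k), dn(u,k)`; `s2, c2, d2` are the values at `2u`
obtained from the addition formulas, and `c3 = cn(3u,k)` from the addition formula
for `u + 2u`. -/
theorem cn_triple (k u s c x s2 c2 d2 c3 : ℝ) (hk0 : 0 < k) (hk1 : k < 1)
    (h1 : s ^ 2 + c ^ 2 = 1) (h2 : k ^ 2 * s ^ 2 + x ^ 2 = 1)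
    (hs : 0 ≤ s) (hc : 0 ≤ c) (hkx : 0 ≤ k ^ 2 + x ^ 2 - 1)
    (hD2 : 1 - k ^ 2 * s ^ 4 ≠ 0)
    (hs2 : s2 = 2 * s * c * x / (1 - k ^ 2 * s ^ 4))
    (hc2 : c2 = (c ^ 2 - s ^ 2 * x ^ 2) / (1 - k ^ 2 * s ^ 4))
    (hd2 : d2 = (x ^ 2 - k ^ 2 * s ^ 2 * c ^ 2) / (1 - k ^ 2 * s ^ 4))
    (hD3 : 1 - k ^ 2 * s ^ 2 * s2 ^ 2 ≠ 0)
    (hc3 : c3 = (c * c2 - s * s2 * x * d2) / (1 - k ^ 2 * s ^ 2 * s2 ^ 2))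
    (hden : (k ^ 2 - 1) ^ 2 + 6 * (k ^ 2 - 1) * x ^ 4 - 4 * (k ^ 2 - 2) * x ^ 6
        - 3 * x ^ 8 ≠ 0) :
    c3 * k * ((k ^ 2 - 1) ^ 2 + 6 * (k ^ 2 - 1) * x ^ 4 - 4 * (k ^ 2 - 2) * x ^ 6
        - 3 * x ^ 8)
      = Real.sqrt (k ^ 2 + x ^ 2 - 1) * (k ^ 4 + (x ^ 2 - 1) ^ 4
        + k ^ 2 * (-2 + 4 * x ^ 2 - 6 * x ^ 4 + 4 * x ^ 6)) :=
  cn_triple_general k s c x s2 c2 d2 c3 hk0 h1 h2 hc hD2 hs2 hc2 hd2 hc3 hden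
end
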